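/- For the substitution ρ : a ↦ a, b ↦ bba, the b-index of the language satisfies Ind_b(ℒ_ρ) = 2: the word bb is legal (so Ind_b ≥ 2), but no word u starting with b satisfies u u u u₁ ∈ ℒ_ρ. -/
import Mathlib


/-- The two-letter alphabet {a, b}. -/
inductive AB | a | b
deriving DecidableEq

/-- Extension of a substitution to words by concatenation. -/
def applyW (σ : AB → List AB) (w : List AB) : List AB := w.flatMap σ

/-- The substitution ρ : a ↦ a, b ↦ bba. -/
def sub0 : AB → List AB
  | AB.a => [AB.a]
  | AB.b => [AB.b, AB.b, AB.a]

/-- A word is legal if it is a subword of ρⁿ(b) for some n. -/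
def Legal (v : List AB) : Prop := ∃ n : ℕ, v <:+: (applyW sub0)^[n] [AB.b]

/-- The (extended, rational) power u^s is legal: u^s = uᵐ followed by a prefix of
u of length t, with s = m + t/|u|. -/
def PowLegal (u : List AB) (s : ℚ) : Prop :=
  ∃ m t : ℕ, t < u.length ∧ s = (m : ℚ) + (t : ℚ) / (u.length : ℚ) ∧
    Legal ((List.replicate m u).flatten ++ u.take t)

def W (n : ℕ) : List AB := (applyW sub0)^[n] [AB.b]

def X (n : ℕ) : AB := (W (n+1)).getD n AB.a

def S : ℕ → ℕ
  | 0 => 0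
  | (k+1) => S k + (sub0 (X k)).length

lemma applyW_append (σ) (u v : List AB) :
    applyW σ (u ++ v) = applyW σ u ++ applyW σ v := by simp [applyW]

lemma W_succ (n : ℕ) : W (n+1) = applyW sub0 (W n) :=
  Function.iterate_succ_apply' _ _ _

lemma W_rec (n : ℕ) : W (n+1) = W n ++ W n ++ [AB.a] := by
  induction n with
  | zero => rfl
  | succ n ih =>
    rw [W_succ (n+1), ih, applyW_append, applyW_append, ← ih, ← W_succ]
    rfl

lemma W_len (n : ℕ) : n < (W n).length := by
  induction n with
  | zero => simp [W]
  | succ n ih =>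
    rw [W_rec]
    simp only [List.length_append, List.length_cons, List.length_nil]
    omega

lemma W_prefix {m n : ℕ} (h : m ≤ n) : W m <+: W n := by
  induction n with
  | zero => simp_all [Nat.le_zero.mp h]
  | succ n ih =>
    rcases Nat.lt_or_ge m (n+1) with h'|h'
    · refine (ih (by omega)).trans ?_
      rw [W_rec]
      exact ⟨W n ++ [AB.a], by simp⟩
    · have : m = n+1 := by omega
      simp [this]

lemma getD_of_prefix {l₁ l₂ : List AB} (h : l₁ <+: l₂) {n : ℕ} (hn : n < l₁.length) :
    l₂.getD n AB.a = l₁.getD n AB.a := by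
  obtain ⟨t, rfl⟩ := h
  rw [List.getD_append _ _ _ _ hn]

lemma X_eq {m k : ℕ} (h : k < (W m).length) : (W m).getD k AB.a = X k := by
  rcases le_total m (k+1) with h'|h'
  · exact (getD_of_prefix (W_prefix h') h).symm
  · exact getD_of_prefix (W_prefix h') (Nat.lt_of_succ_lt (W_len (k+1)))

lemma legal_window {v : List AB} (h : Legal v) :
    ∃ p, ∀ i < v.length, v.getD i AB.a = X (p + i) := by
  obtain ⟨n, s, t, hst⟩ := h
  refine ⟨s.length, fun i hi => ?_⟩
  have hlt : s.length + i < (W n).length := by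
    have : (s ++ v ++ t).length = (W n).length := by rw [hst]; rfl
    simp only [List.length_append] at this
    omega
  rw [← X_eq hlt]
  have hWn : (W n) = s ++ v ++ t := by rw [hst]; rfl
  rw [hWn, List.append_assoc]
  rw [List.getD_append_right _ _ _ _ (by omega), Nat.add_sub_cancel_left,
    List.getD_append _ _ _ _ hi]

lemma window_legal {v : List AB} (p : ℕ)
    (h : ∀ i < v.length, v.getD i AB.a = X (p + i)) : Legal v := by
  set n := p + v.length with hn
  have hlen : p + v.length < (W n).length := W_len n
  have hv : v = ((W n).drop p).take v.length := by
    apply List.ext_getElem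
    · rw [List.length_take, List.length_drop]; omega
    · intro i h1 h2
      have hDi : i < ((W n).drop p).length := by rw [List.length_drop]; omega
      rw [List.getElem_take, List.getElem_drop]
      have := h i h1
      rw [List.getD_eq_getElem _ _ h1] at this
      rw [this, ← X_eq (show p + i < (W n).length by omega),
        List.getD_eq_getElem _ _ (show p + i < (W n).length by omega)]
  refine ⟨n, ?_⟩
  rw [hv]
  exact (List.take_prefix _ _).isInfix.trans (List.drop_suffix _ _).isInfix

lemma sub0_len_pos (c : AB) : 0 < (sub0 c).length := by cases c <;> simp [sub0]

lemma sub0_head (c : AB) : (sub0 c).getD 0 AB.a = c := by cases c <;> rfl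

lemma S_lt_succ (k : ℕ) : S k < S (k+1) := by
  have := sub0_len_pos (X k)
  simp only [S]; omega

lemma S_mono : StrictMono S := strictMono_nat_of_lt_succ S_lt_succ

lemma S_add_le (k i : ℕ) : S k + i ≤ S (k + i) := by
  induction i with
  | zero => simp
  | succ i ih =>
    have h : k + (i+1) = (k+i)+1 := by omega
    rw [h]
    have := S_lt_succ (k+i); omega

lemma Ssum {n k : ℕ} (h : k ≤ (W n).length) :
    S k = (applyW sub0 ((W n).take k)).length := by
  induction k with
  | zero => simp [S, applyW]
  | succ k ih =>
    have hk : k < (W n).length := by omega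
    rw [List.take_succ, List.getElem?_eq_getElem hk]
    simp only [Option.toList]
    rw [applyW_append, List.length_append]
    rw [S, ih (le_of_lt hk)]
    congr 1
    have : (W n).getD k AB.a = X k := X_eq hk
    rw [List.getD_eq_getElem _ _ hk] at this
    simp [applyW, this]

lemma flat_getD : ∀ (w : List AB) (k j : ℕ), k < w.length →
    j < (sub0 (w.getD k AB.a)).length →
    (applyW sub0 w).getD ((applyW sub0 (w.take k)).length + j) AB.a
      = (sub0 (w.getD k AB.a)).getD j AB.a := by
  intro w
  induction w with
  | nil => intro k j h; simp at h
  | cons c w ih =>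
    intro k j hk hj
    cases k with
    | zero =>
      simp only [List.take_zero, applyW, List.flatMap_nil, List.length_nil, Nat.zero_add,
        List.getD_cons_zero, List.flatMap_cons] at *
      rw [List.getD_append _ _ _ _ hj]
    | succ k =>
      simp only [List.getD_cons_succ] at *
      have hk' : k < w.length := by simpa using hk
      rw [List.take_succ_cons]
      simp only [applyW, List.flatMap_cons] at *
      rw [List.length_append, Nat.add_assoc, List.getD_append_right _ _ _ _ (Nat.le_add_right _ _),
        Nat.add_sub_cancel_left]
      exact ih k j hk' hj

lemma F (k j : ℕ) (hj : j < (sub0 (X k)).length) :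
    X (S k + j) = (sub0 (X k)).getD j AB.a := by
  have hkW : k < (W (k+1)).length := Nat.lt_of_succ_lt (W_len (k+1))
  have hXk : (W (k+1)).getD k AB.a = X k := X_eq hkW
  have hS : S k = (applyW sub0 ((W (k+1)).take k)).length := Ssum (le_of_lt hkW)
  have hSk1 : S (k+1) ≤ (W (k+2)).length := by
    have h1 : S (k+1) = (applyW sub0 ((W (k+1)).take (k+1))).length :=
      Ssum (n := k+1) (le_of_lt (W_len (k+1)))
    have h2 : W (k+2) = applyW sub0 ((W (k+1)).take (k+1))
        ++ applyW sub0 ((W (k+1)).drop (k+1)) := by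
      rw [W_succ (k+1), ← applyW_append, List.take_append_drop]
    rw [h1, h2, List.length_append]
    omega
  have hlt : S k + j < (W (k+2)).length := by
    have : S k + j < S (k+1) := by rw [S]; omega
    omega
  rw [← X_eq hlt, W_succ (k+1), hS, ← hXk]
  exact flat_getD _ k j hkW (by rwa [hXk])

lemma X_S (k : ℕ) : X (S k) = X k := by
  have := F k 0 (sub0_len_pos (X k))
  rwa [Nat.add_zero, sub0_head] at this

lemma S_cover (n : ℕ) : ∃ k, S k ≤ n ∧ n < S (k+1) := by
  induction n with
  | zero => exact ⟨0, by simp [S], by have := S_lt_succ 0; simp [S] at this ⊢; omega⟩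
  | succ n ih =>
    obtain ⟨k, h1, h2⟩ := ih
    rcases Nat.lt_or_ge (n+1) (S (k+1)) with h|h
    · exact ⟨k, by omega, h⟩
    · exact ⟨k+1, h, by have := S_lt_succ (k+1); omega⟩

lemma syll_a {k : ℕ} (h : X k = AB.a) : S (k+1) = S k + 1 := by
  simp [S, h, sub0]

lemma syll_b {k : ℕ} (h : X k = AB.b) :
    S (k+1) = S k + 3 ∧ X (S k) = AB.b ∧ X (S k + 1) = AB.b ∧ X (S k + 2) = AB.a := by
  refine ⟨by simp [S, h, sub0], ?_, ?_, ?_⟩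
  · rw [X_S, h]
  · have := F k 1 (by simp [h, sub0]); rwa [h] at this
  · have := F k 2 (by simp [h, sub0]); rwa [h] at this

/-- If `X n = b` and `X (n+1) = b` then `n` is the start of a `bba` syllable. -/
lemma bb_start {n : ℕ} (h1 : X n = AB.b) (h2 : X (n+1) = AB.b) :
    ∃ k, S k = n ∧ X k = AB.b := by
  obtain ⟨k, hk1, hk2⟩ := S_cover n
  cases hXk : X k with
  | a =>
    have := syll_a hXk
    have hn : n = S k := by omega
    rw [hn, X_S, hXk] at h1; exact absurd h1 (by simp)
  | b =>
    obtain ⟨hlen, hb0, hb1, hb2⟩ := syll_b hXk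
    have : n = S k ∨ n = S k + 1 ∨ n = S k + 2 := by omega
    rcases this with h|h|h
    · exact ⟨k, h.symm, hXk⟩
    · rw [h] at h2
      have : S k + 1 + 1 = S k + 2 := by omega
      rw [this, hb2] at h2; exact absurd h2 (by simp)
    · rw [h, hb2] at h1; exact absurd h1 (by simp)

/-- If `X n = b` and `X (n+1) = a` then `n` is the second `b` of a `bba` syllable. -/
lemma second_b {n : ℕ} (h1 : X n = AB.b) (h2 : X (n+1) = AB.a) :
    ∃ k, S k = n - 1 ∧ 1 ≤ n ∧ X (n-1) = AB.b ∧ X k = AB.b := by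
  obtain ⟨k, hk1, hk2⟩ := S_cover n
  cases hXk : X k with
  | a =>
    have := syll_a hXk
    have hn : n = S k := by omega
    rw [hn, X_S, hXk] at h1; exact absurd h1 (by simp)
  | b =>
    obtain ⟨hlen, hb0, hb1, hb2⟩ := syll_b hXk
    have : n = S k ∨ n = S k + 1 ∨ n = S k + 2 := by omega
    rcases this with h|h|h
    · rw [h] at h2; rw [hb1] at h2; exact absurd h2 (by simp)
    · exact ⟨k, by omega, by omega, by rw [show n - 1 = S k by omega]; exact hb0, hXk⟩
    · rw [h, hb2] at h1; exact absurd h1 (by simp)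

lemma no_bbb {n : ℕ} (h1 : X n = AB.b) (h2 : X (n+1) = AB.b) : X (n+2) = AB.a := by
  obtain ⟨k, hS, hX⟩ := bb_start h1 h2
  obtain ⟨_, _, _, hb2⟩ := syll_b hX
  rwa [hS] at hb2

/-- Transfer of syllable structure along a letter-periodicity window. -/
lemma transfer {k k' q L : ℕ} (hk : S k = q) (hk' : S k' = q + L)
    (per : ∀ d ≤ L, X (q + d) = X (q + L + d)) :
    ∀ i d, S (k + i) = q + d → d ≤ L →
      S (k' + i) = q + L + d ∧ X (k + i) = X (k' + i) := by
  intro i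
  induction i with
  | zero =>
    intro d hd hdL
    simp only [Nat.add_zero] at *
    have hd0 : d = 0 := by omega
    subst hd0
    refine ⟨by simpa using hk', ?_⟩
    have e1 : X k = X (S k) := (X_S k).symm
    have e2 : X k' = X (S k') := (X_S k').symm
    rw [e1, e2, hk, hk']
    simpa using per 0 (Nat.zero_le L)
  | succ i ih =>
    intro d' hd' hd'L
    -- first recover the data at step i
    have hup : q ≤ S (k + i) := by rw [← hk]; exact S_mono.le_iff_le.mpr (by omega)
    set d := S (k + i) - q with hdd
    have hSd : S (k + i) = q + d := by omega
    have hdle : d ≤ L := by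
      have : S (k + i) ≤ S (k + (i+1)) := S_mono.le_iff_le.mpr (by omega)
      omega
    obtain ⟨hS', hXeq⟩ := ih d hSd hdle
    have hlen : (sub0 (X (k + i))).length = (sub0 (X (k' + i))).length := by rw [hXeq]
    have hstep : S (k + i + 1) = S (k + i) + (sub0 (X (k+i))).length := by simp [S]
    have hstep' : S (k' + i + 1) = S (k' + i) + (sub0 (X (k'+i))).length := by simp [S]
    have hki1 : k + (i+1) = (k + i) + 1 := by omega
    have hki1' : k' + (i+1) = (k' + i) + 1 := by omega
    rw [hki1] at hd' ⊢
    rw [hki1']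
    constructor
    · rw [hstep', ← hlen]; omega
    · -- letters at k+i+1 and k'+i+1
      have e1 : X ((k+i)+1) = X (S ((k+i)+1)) := (X_S _).symm
      have e2 : X ((k'+i)+1) = X (S ((k'+i)+1)) := (X_S _).symm
      rw [e1, e2, hd']
      have : S ((k'+i)+1) = q + L + d' := by rw [hstep', ← hlen]; omega
      rw [this]
      exact per d' hd'L

lemma common {q L k k' k'' : ℕ} (hL1 : 1 ≤ L)
    (hk : S k = q) (hk' : S k' = q + L) (hk'' : S k'' = q + 2*L)
    (hXk : X k = AB.b)
    (per : ∀ d ≤ L, X (q + d) = X (q + L + d))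
    (IH : ∀ L' < L, 1 ≤ L' → ∀ p, (∀ i ≤ L', X (p + i) = X (p + L' + i)) →
      X p ≠ AB.b) : False := by
  have hkk' : k < k' := S_mono.lt_iff_lt.mp (by omega)
  set L' := k' - k with hL'
  have hkL' : k + L' = k' := by omega
  have htr := transfer hk hk' per
  have h1 : S (k + L') = q + L := by rw [hkL', hk']
  obtain ⟨h2, _⟩ := htr L' L h1 le_rfl
  have hk''eq : k' + L' = k'' := by
    apply S_mono.injective
    rw [hk'', h2]; omega
  -- L' < L
  have hL'1 : 1 ≤ L' := by omega
  have hSk1 : S (k+1) = S k + 3 := (syll_b hXk).1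
  have hadd : S (k+1) + (L'-1) ≤ S ((k+1) + (L'-1)) := S_add_le (k+1) (L'-1)
  have hL'L : L' < L := by
    have he : (k+1) + (L'-1) = k + L' := by omega
    rw [he, h1, hSk1, hk] at hadd
    omega
  -- periodicity upstairs
  have perUp : ∀ i ≤ L', X (k + i) = X (k + L' + i) := by
    intro i hi
    have hqi : q ≤ S (k + i) := by rw [← hk]; exact S_mono.le_iff_le.mpr (by omega)
    have hub : S (k + i) ≤ q + L := by rw [← h1]; exact S_mono.le_iff_le.mpr (by omega)
    obtain ⟨_, hX⟩ := htr i (S (k+i) - q) (by omega) (by omega)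
    rw [show k + L' + i = k' + i by omega]
    exact hX
  exact IH L' hL'L hL'1 k perUp hXk

lemma main : ∀ L, 1 ≤ L → ∀ p, (∀ i ≤ L, X (p + i) = X (p + L + i)) → X p ≠ AB.b := by
  intro L
  induction L using Nat.strong_induction_on with
  | _ L IH =>
    intro hL1 p per hb
    have hpL : X (p + L) = AB.b := by
      have := per 0 (Nat.zero_le L); simp only [Nat.add_zero] at this; rw [← this]; exact hb
    have h2L : X (p + 2*L) = AB.b := by
      have := per L le_rfl
      rw [show p + L + L = p + 2*L by omega] at this
      rw [← this]; exact hpL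
    rcases Nat.lt_or_ge L 2 with hL2|hL2
    · -- L = 1 : bbb
      have hLeq : L = 1 := by omega
      subst hLeq
      have h1 : X (p+1) = AB.b := hpL
      have h2 : X (p+2) = AB.b := h2L
      have := no_bbb hb h1
      rw [this] at h2; exact absurd h2 (by simp)
    -- L ≥ 2
    cases hX1 : X (p+1) with
    | b =>
      have hXL1 : X (p + L + 1) = AB.b := by
        have := per 1 (by omega)
        rw [← this]; exact hX1
      obtain ⟨k, hk, hXk⟩ := bb_start hb (by rwa [show p + 1 = p + 1 from rfl])
      obtain ⟨k', hk', hXk'⟩ := bb_start hpL hXL1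
      -- find start at p + 2L
      obtain ⟨k₂, hk₂1, hk₂2⟩ := S_cover (p + 2*L)
      have hk''ex : S k₂ = p + 2*L ∧ X k₂ = AB.b := by
        cases hXk₂ : X k₂ with
        | a =>
          have hlen := syll_a hXk₂
          have hn : p + 2*L = S k₂ := by omega
          rw [hn, X_S, hXk₂] at h2L; exact absurd h2L (by simp)
        | b =>
          obtain ⟨hlen, hb0, hb1, hb2⟩ := syll_b hXk₂
          have hcase : p + 2*L = S k₂ ∨ p + 2*L = S k₂ + 1 ∨ p + 2*L = S k₂ + 2 := by omega
          rcases hcase with h|h|h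
          · exact ⟨h.symm, rfl⟩
          · exfalso
            -- X (p + 2L - 1) = b, hence X (p + L - 1) = b, contradiction via no_bbb
            have hb' : X (p + 2*L - 1) = AB.b := by
              rw [show p + 2*L - 1 = S k₂ by omega]; exact hb0
            have hper : X (p + (L-1)) = X (p + L + (L-1)) := per (L-1) (by omega)
            rw [show p + L + (L-1) = p + 2*L - 1 by omega] at hper
            have hbm : X (p + (L-1)) = AB.b := by rw [hper]; exact hb'
            have hnb := no_bbb (n := p + (L-1)) hbm (by rw [show p + (L-1) + 1 = p + L by omega]; exact hpL)
            rw [show p + (L-1) + 2 = p + L + 1 by omega] at hnb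
            rw [hnb] at hXL1; exact absurd hXL1 (by simp)
          · exfalso
            rw [show p + 2*L = S k₂ + 2 from h, hb2] at h2L; exact absurd h2L (by simp)
      obtain ⟨hk'', hXk''⟩ := hk''ex
      exact common hL1 hk (by rw [hk']) (by rw [hk'']) hXk per
        (fun L' h1 h2 p hp => IH L' h1 h2 p hp)
    | a =>
      have hXL1 : X (p + L + 1) = AB.a := by
        have := per 1 (by omega)
        rw [← this]; exact hX1
      obtain ⟨k, hk, hp1, hpm1, hXk⟩ := second_b hb hX1
      obtain ⟨k', hk', hpL1, hpLm1, hXk'⟩ := second_b hpL hXL1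
      rw [show p + L - 1 = p + (L-1) by omega] at hpLm1
      -- X (p + 2L - 1) = b
      have hb2Lm1 : X (p + 2*L - 1) = AB.b := by
        have hper : X (p + (L-1)) = X (p + L + (L-1)) := per (L-1) (by omega)
        rw [show p + L + (L-1) = p + 2*L - 1 by omega] at hper
        rw [← hper]; exact hpLm1
      obtain ⟨k'', hk'', hXk''⟩ := bb_start hb2Lm1
        (by rw [show p + 2*L - 1 + 1 = p + 2*L by omega]; exact h2L)
      -- shifted window q = p - 1
      set q := p - 1 with hq
      have hkq : S k = q := hk
      have hk'q : S k' = q + L := by rw [hk']; omega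
      have hk''q : S k'' = q + 2*L := by rw [hk'']; omega
      have per' : ∀ d ≤ L, X (q + d) = X (q + L + d) := by
        intro d hd
        cases d with
        | zero =>
          simp only [Nat.add_zero]
          rw [show q = p - 1 from rfl, show q + L = p + (L-1) by omega]
          rw [hpm1, hpLm1]
        | succ d =>
          have hper := per d (by omega)
          rw [show q + (d+1) = p + d by omega, show q + L + (d+1) = p + L + d by omega]
          exact hper
      have hXq : X k = AB.b := hXk
      exact common hL1 hkq hk'q hk''q hXq per' (fun L' h1 h2 p hp => IH L' h1 h2 p hp)

lemma legal_infix {v w : List AB} (h : v <:+: w) (hw : Legal w) : Legal v := by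
  obtain ⟨n, hn⟩ := hw; exact ⟨n, h.trans hn⟩

lemma not_uub {u : List AB} (hu : u.head? = some AB.b) :
    ¬ Legal (u ++ u ++ [AB.b]) := by
  intro hleg
  obtain ⟨u', rfl⟩ : ∃ u', u = AB.b :: u' := by
    cases u with
    | nil => simp at hu
    | cons c u' => simp at hu; exact ⟨u', by rw [hu]⟩
  set u := AB.b :: u' with hudef
  set L := u.length with hLdef
  have hL1 : 1 ≤ L := by simp [hLdef, hudef]
  obtain ⟨p, hw⟩ := legal_window hleg
  have hwlen : (u ++ u ++ [AB.b]).length = 2*L + 1 := by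
    simp [hLdef]; omega
  have hgetD : ∀ i ≤ L, (u ++ u ++ [AB.b]).getD i AB.a = (u ++ u ++ [AB.b]).getD (L + i) AB.a := by
    intro i hi
    rw [List.append_assoc]
    rcases Nat.lt_or_ge i L with h|h
    · rw [List.getD_append _ _ _ _ h,
        List.getD_append_right _ _ _ _ (by omega : u.length ≤ L + i)]
      rw [show L + i - u.length = i by omega, List.getD_append _ _ _ _ h]
    · have hiL : i = L := by omega
      subst hiL
      rw [List.getD_append_right _ _ _ _ (by omega : u.length ≤ L),
        List.getD_append_right _ _ _ _ (by omega : u.length ≤ L + L)]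
      rw [show L - u.length = 0 by omega, show L + L - u.length = L by omega]
      rw [List.getD_append _ _ _ _ (by omega : (0:ℕ) < u.length),
        List.getD_append_right _ _ _ _ (by omega : u.length ≤ L)]
      rw [show L - u.length = 0 by omega]
      rfl
  have per : ∀ i ≤ L, X (p + i) = X (p + L + i) := by
    intro i hi
    have h1 := hw i (by omega)
    have h2 := hw (L + i) (by omega)
    rw [← Nat.add_assoc] at h2
    rw [← h1, ← h2]
    exact hgetD i hi
  have hXp : X p = AB.b := by
    have := hw 0 (by omega)
    simp only [Nat.add_zero] at this
    rw [← this, List.append_assoc, List.getD_append _ _ _ _ (by omega : (0:ℕ) < u.length)]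
    simp [hudef]
  exact main L hL1 p per hXp

lemma uub_prefix_pow {u : List AB} {u' : List AB} (hu : u = AB.b :: u') {m t : ℕ}
    (ht : t < u.length) (hbig : 2 * u.length < m * u.length + t) :
    (u ++ u ++ [AB.b]) <+: ((List.replicate m u).flatten ++ u.take t) := by
  have hL1 : 1 ≤ u.length := by rw [hu]; simp
  have hm2 : 2 ≤ m := by nlinarith
  rcases Nat.lt_or_ge m 3 with hm3|hm3
  · -- m = 2, t ≥ 1
    have hm : m = 2 := by omega
    subst hm
    have ht1 : 1 ≤ t := by omega
    have htake : u.take t = AB.b :: (u'.take (t-1)) := by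
      rw [hu]
      cases t with
      | zero => omega
      | succ t' => simp
    refine ⟨u'.take (t-1), ?_⟩
    simp only [List.replicate, List.flatten, htake]
    simp [List.append_assoc]
  · -- m ≥ 3
    obtain ⟨m', rfl⟩ : ∃ m', m = m' + 3 := ⟨m - 3, by omega⟩
    refine ⟨u' ++ ((List.replicate m' u).flatten ++ u.take t), ?_⟩
    rw [show m' + 3 = 3 + m' by omega]
    rw [List.replicate_add]
    simp only [List.flatten_append]
    have h3 : (List.replicate 3 u).flatten = u ++ u ++ u := by
      simp [List.replicate, List.append_assoc]
    rw [h3]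
    conv_rhs => rw [hu]
    simp [hu, List.append_assoc]

/-- Ind_b(ℒ_ρ) = 2 for ρ : a ↦ a, b ↦ bba: the power 2 is attained (bb is legal),
every legal power of a word starting with b is ≤ 2, and in particular no word u
starting with b has u u u u₁ legal. -/
theorem stmt12 :
    (∃ u : List AB, u.head? = some AB.b ∧ Legal u ∧ PowLegal u 2) ∧
    (∀ (u : List AB) (s : ℚ), u.head? = some AB.b → Legal u → PowLegal u s →
      s ≤ 2) ∧
    (∀ u : List AB, u.head? = some AB.b →
      ¬ Legal (u ++ u ++ u ++ [AB.b])) := by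
  refine ⟨?_, ?_, ?_⟩
  · refine ⟨[AB.b], rfl, ⟨0, List.infix_refl _⟩, 2, 0, by simp, by norm_num, ?_⟩
    refine ⟨1, ?_⟩
    have : (List.replicate 2 [AB.b]).flatten ++ [AB.b].take 0 = [AB.b, AB.b] := rfl
    rw [this]
    have h1 : (applyW sub0)^[1] [AB.b] = [AB.b, AB.b, AB.a] := rfl
    rw [h1]
    exact ⟨[], [AB.a], rfl⟩
  · intro u s hu _ ⟨m, t, ht, hs, hlegw⟩
    by_contra hs2
    push_neg at hs2
    obtain ⟨u', hucons⟩ : ∃ u', u = AB.b :: u' := by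
      cases u with
      | nil => simp at hu
      | cons c u'' => simp at hu; exact ⟨u'', by rw [hu]⟩
    have hL1 : 1 ≤ u.length := by rw [hucons]; simp
    have hLQ : (0:ℚ) < (u.length : ℚ) := by exact_mod_cast hL1
    have hbigQ : (2 * u.length : ℚ) < m * u.length + t := by
      rw [hs] at hs2
      have h := mul_lt_mul_of_pos_right hs2 hLQ
      rwa [add_mul, div_mul_cancel₀ _ (ne_of_gt hLQ)] at h
    have hbig : 2 * u.length < m * u.length + t := by exact_mod_cast hbigQ
    exact not_uub hu (legal_infix (uub_prefix_pow hucons ht hbig).isInfix hlegw)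
  · intro u hu hleg
    obtain ⟨u', hucons⟩ : ∃ u', u = AB.b :: u' := by
      cases u with
      | nil => simp at hu
      | cons c u'' => simp at hu; exact ⟨u'', by rw [hu]⟩
    have hpre : (u ++ u ++ [AB.b]) <+: (u ++ u ++ u ++ [AB.b]) := by
      refine ⟨u' ++ [AB.b], ?_⟩
      conv_rhs => rw [hucons]
      simp [hucons, List.append_assoc]
    exact not_uub hu (legal_infix hpre.isInfix hleg)
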